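/- For all p, q ∈ [1,∞] and every ρ ∈ D_n, min{ℓ_{q,p}(ρ − σ) : σ ∈ I_n} = ℓ_{q,p}(ρ − ρ_diag), where ρ_diag is the diagonal matrix with the same diagonal entries as ρ. -/

import Mathlib

open scoped ENNReal ComplexOrder
open Matrix

noncomputable section

/-- The `ℓ_p` norm of a complex vector, `p ∈ [1,∞]`. -/
def lpV (p : ℝ≥0∞) {n : ℕ} (v : Fin n → ℂ) : ℝ :=
  if p = ∞ then ⨆ i, ‖v i‖ else (∑ i, ‖v i‖ ^ p.toReal) ^ (1 / p.toReal)

/-- The `ℓ_{q,p}` norm of a complex matrix: the `ℓ_q` norm of the vector of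
`ℓ_p` norms of its columns. -/
def lqp (q p : ℝ≥0∞) {m n : ℕ} (A : Matrix (Fin m) (Fin n) ℂ) : ℝ :=
  lpV q fun j => ((lpV p fun i => A i j : ℝ) : ℂ)

/-- A density matrix: positive semidefinite with trace one. -/
def IsDensity {n : ℕ} (ρ : Matrix (Fin n) (Fin n) ℂ) : Prop :=
  ρ.PosSemidef ∧ ρ.trace = 1

/-- An incoherent (classical) state: a diagonal density matrix. -/
def IsIncoherentState {n : ℕ} (ρ : Matrix (Fin n) (Fin n) ℂ) : Prop :=
  IsDensity ρ ∧ ρ.IsDiag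

/-- `C_ν(ρ) = min {ν(ρ - σ) : σ ∈ I_n}` (as an infimum). -/
def distC {n : ℕ} (ν : Matrix (Fin n) (Fin n) ℂ → ℝ) (ρ : Matrix (Fin n) (Fin n) ℂ) : ℝ :=
  sInf {x | ∃ σ, IsIncoherentState σ ∧ x = ν (ρ - σ)}

/-- A set of incoherent Kraus operators `K_j : M_{m,n}`:
`∑ K_j† K_j = I` and each `K_j σ K_j†` is diagonal for diagonal densities `σ`. -/
def IsIncoherentKraus {m n r : ℕ} (K : Fin r → Matrix (Fin m) (Fin n) ℂ) : Prop :=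
  (∑ j, (K j)ᴴ * K j) = 1 ∧
  ∀ j (σ : Matrix (Fin n) (Fin n) ℂ), IsIncoherentState σ → (K j * σ * (K j)ᴴ).IsDiag

/-- A family of candidate coherence measures, one for each dimension. -/
abbrev CFam := ∀ n : ℕ, Matrix (Fin n) (Fin n) ℂ → ℝ

/-- Condition (B1) = (C1): nonnegativity, vanishing exactly on incoherent states. -/
def CondB1 (C : CFam) : Prop :=
  ∀ n (ρ : Matrix (Fin n) (Fin n) ℂ), IsDensity ρ →
    0 ≤ C n ρ ∧ (C n ρ = 0 ↔ IsIncoherentState ρ)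

/-- Condition (B2) = (C2): monotonicity under incoherent operations. -/
def CondB2 (C : CFam) : Prop :=
  ∀ (n m r : ℕ) (K : Fin r → Matrix (Fin m) (Fin n) ℂ), IsIncoherentKraus K →
    ∀ ρ, IsDensity ρ → C m (∑ j, K j * ρ * (K j)ᴴ) ≤ C n ρ

/-- Condition (B3): monotonicity on average under selective incoherent operations. -/
def CondB3 (C : CFam) : Prop :=
  ∀ (n m r : ℕ) (K : Fin r → Matrix (Fin m) (Fin n) ℂ), IsIncoherentKraus K →
    ∀ ρ, IsDensity ρ →
      ∑ j, ((K j * ρ * (K j)ᴴ).trace).re *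
          C m (((((K j * ρ * (K j)ᴴ).trace).re)⁻¹ : ℂ) • (K j * ρ * (K j)ᴴ)) ≤ C n ρ

/-- Condition (B4): convexity. -/
def CondB4 (C : CFam) : Prop :=
  ∀ (n r : ℕ) (ρ : Fin r → Matrix (Fin n) (Fin n) ℂ) (p : Fin r → ℝ),
    (∀ j, IsDensity (ρ j)) → (∀ j, 0 ≤ p j) → (∑ j, p j) = 1 →
    C n (∑ j, (p j : ℂ) • ρ j) ≤ ∑ j, p j * C n (ρ j)

/-- Block diagonal direct sum of two square matrices, reindexed to `Fin (n₁ + n₂)`. -/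
def dirSum {n₁ n₂ : ℕ} (A : Matrix (Fin n₁) (Fin n₁) ℂ) (B : Matrix (Fin n₂) (Fin n₂) ℂ) :
    Matrix (Fin (n₁ + n₂)) (Fin (n₁ + n₂)) ℂ :=
  (Matrix.fromBlocks A 0 0 B).submatrix finSumFinEquiv.symm finSumFinEquiv.symm

/-- Condition (C3): additivity under direct sum convex combinations. -/
def CondC3 (C : CFam) : Prop :=
  ∀ (n₁ n₂ : ℕ) (ρ₁ : Matrix (Fin n₁) (Fin n₁) ℂ) (ρ₂ : Matrix (Fin n₂) (Fin n₂) ℂ)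
    (p₁ p₂ : ℝ), IsDensity ρ₁ → IsDensity ρ₂ → 0 ≤ p₁ → 0 ≤ p₂ → p₁ + p₂ = 1 →
    C (n₁ + n₂) (dirSum ((p₁ : ℂ) • ρ₁) ((p₂ : ℂ) • ρ₂)) = p₁ * C n₁ ρ₁ + p₂ * C n₂ ρ₂

/-- A norm on `M_n(ℂ)` (nonnegativity is automatic). -/
def IsMatrixNorm {n : ℕ} (ν : Matrix (Fin n) (Fin n) ℂ → ℝ) : Prop :=
  (∀ A, ν A = 0 ↔ A = 0) ∧ (∀ (c : ℂ) A, ν (c • A) = ‖c‖ * ν A) ∧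
  (∀ A B, ν (A + B) ≤ ν A + ν B)

lemma lpV_nonneg (p : ℝ≥0∞) {n : ℕ} (v : Fin n → ℂ) : 0 ≤ lpV p v := by
  unfold lpV
  split_ifs
  · exact Real.iSup_nonneg fun i => norm_nonneg _
  · positivity

lemma lpV_mono (p : ℝ≥0∞) {n : ℕ} {u v : Fin n → ℂ} (h : ∀ i, ‖u i‖ ≤ ‖v i‖) :
    lpV p u ≤ lpV p v := by
  unfold lpV
  split_ifs
  · exact ciSup_mono (Set.finite_range _).bddAbove h
  · gcongr with i
    exact h i

lemma lqp_mono (q p : ℝ≥0∞) {m n : ℕ} {A B : Matrix (Fin m) (Fin n) ℂ}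
    (h : ∀ i j, ‖A i j‖ ≤ ‖B i j‖) : lqp q p A ≤ lqp q p B :=
  lpV_mono q fun j => by
    simp only [Complex.norm_real, Real.norm_of_nonneg (lpV_nonneg _ _)]
    exact lpV_mono p fun i => h i j

lemma lqp_sub_diagonal_le_of_isDiag (q p : ℝ≥0∞) {n : ℕ} (A : Matrix (Fin n) (Fin n) ℂ)
    {D : Matrix (Fin n) (Fin n) ℂ} (hD : D.IsDiag) :
    lqp q p (A - Matrix.diagonal fun i => A i i) ≤ lqp q p (A - D) := by
  refine lqp_mono q p fun i j => ?_
  rcases eq_or_ne i j with rfl | hij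
  · simp
  · rw [Matrix.sub_apply, Matrix.sub_apply, diagonal_apply_ne _ hij, hD hij]

lemma IsDensity.isIncoherentState_diagonal {n : ℕ} {ρ : Matrix (Fin n) (Fin n) ℂ}
    (hρ : IsDensity ρ) : IsIncoherentState (Matrix.diagonal fun i => ρ i i) :=
  ⟨⟨PosSemidef.diagonal fun _ => hρ.1.diag_nonneg, by rw [trace_diagonal]; exact hρ.2⟩,
    isDiag_diagonal _⟩

theorem distC_lqp_eq_offdiag_general (q p : ℝ≥0∞) (n : ℕ)
    (ρ : Matrix (Fin n) (Fin n) ℂ) (hρ : IsDensity ρ) :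
    distC (lqp q p) ρ = lqp q p (ρ - Matrix.diagonal fun i => ρ i i) :=
  IsLeast.csInf_eq
    ⟨⟨_, hρ.isIncoherentState_diagonal, rfl⟩,
      by rintro _ ⟨σ, hσ, rfl⟩; exact lqp_sub_diagonal_le_of_isDiag q p ρ hσ.2⟩

/-- for all `p, q ∈ [1,∞]` and every density matrix `ρ`,
`min{ℓ_{q,p}(ρ - σ) : σ ∈ I_n} = ℓ_{q,p}(ρ - ρ_diag)`. -/
theorem distC_lqp_eq_offdiag (q p : ℝ≥0∞) (hq : 1 ≤ q) (hp : 1 ≤ p) (n : ℕ)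
    (ρ : Matrix (Fin n) (Fin n) ℂ) (hρ : IsDensity ρ) :
    distC (lqp q p) ρ = lqp q p (ρ - Matrix.diagonal fun i => ρ i i) :=
  distC_lqp_eq_offdiag_general q p n ρ hρ
end
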